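/- The groups G_{n,D}^2 and G_{n+1}^2 / ⟨a_{i(n+1)}a_{j(n+1)} = a_{j(n+1)}a_{i(n+1)}⟩ are isomorphic; specifically, the homomorphisms ω (sending a_{ij} ↦ a_{ij} for i,j ≤ n and a_{i(n+1)} ↦ τ_i) and κ (sending a_{ij} ↦ a_{ij} and τ_i ↦ a_{i(n+1)}) are mutually inverse. -/

import Mathlib

/-- Index type for the generators `a_{ij}`: two-element subsets of `Fin n`. -/
abbrev PairIdx (n : ℕ) := {s : Finset (Fin n) // s.card = 2}

/-- The unordered pair `{i,j}` as an index. -/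
def mkPair {n : ℕ} (i j : Fin n) (h : i ≠ j) : PairIdx n := ⟨{i, j}, Finset.card_pair h⟩

/-- Relations of the group `G_n^2`. -/
def gn2Rels (n : ℕ) : Set (FreeGroup (PairIdx n)) :=
  {r | (∃ (i j : Fin n) (h : i ≠ j),
          r = FreeGroup.of (mkPair i j h) * FreeGroup.of (mkPair i j h)) ∨
       (∃ (i j k l : Fin n) (hij : i ≠ j) (hkl : k ≠ l),
          i ≠ k ∧ i ≠ l ∧ j ≠ k ∧ j ≠ l ∧
          r = FreeGroup.of (mkPair i j hij) * FreeGroup.of (mkPair k l hkl) *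
              (FreeGroup.of (mkPair i j hij))⁻¹ * (FreeGroup.of (mkPair k l hkl))⁻¹) ∨
       (∃ (i j k : Fin n) (hij : i ≠ j) (hik : i ≠ k) (hjk : j ≠ k),
          r = FreeGroup.of (mkPair i j hij) * FreeGroup.of (mkPair i k hik) *
              FreeGroup.of (mkPair j k hjk) *
              (FreeGroup.of (mkPair j k hjk) * FreeGroup.of (mkPair i k hik) *
               FreeGroup.of (mkPair i j hij))⁻¹)}

/-- The group `G_n^2`. -/
abbrev Gn2 (n : ℕ) := PresentedGroup (gn2Rels n)

/-- The generator `a_{ij}` of `G_n^2`. -/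
def A2 {n : ℕ} (i j : Fin n) (h : i ≠ j) : Gn2 n := PresentedGroup.of (mkPair i j h)

/-- Relations of the group `G_{n,P}^2` (`G_n^2` with parity). -/
def gnP2Rels (n : ℕ) : Set (FreeGroup (PairIdx n × ZMod 2)) :=
  {r | (∃ (i j : Fin n) (h : i ≠ j) (ε : ZMod 2),
          r = FreeGroup.of (mkPair i j h, ε) * FreeGroup.of (mkPair i j h, ε)) ∨
       (∃ (i j k l : Fin n) (hij : i ≠ j) (hkl : k ≠ l) (ε₁ ε₂ : ZMod 2),
          i ≠ k ∧ i ≠ l ∧ j ≠ k ∧ j ≠ l ∧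
          r = FreeGroup.of (mkPair i j hij, ε₁) * FreeGroup.of (mkPair k l hkl, ε₂) *
              (FreeGroup.of (mkPair i j hij, ε₁))⁻¹ * (FreeGroup.of (mkPair k l hkl, ε₂))⁻¹) ∨
       (∃ (i j k : Fin n) (hij : i ≠ j) (hik : i ≠ k) (hjk : j ≠ k)
          (εij εik εjk : ZMod 2), εij + εik + εjk = 0 ∧
          r = FreeGroup.of (mkPair i j hij, εij) * FreeGroup.of (mkPair i k hik, εik) *
              FreeGroup.of (mkPair j k hjk, εjk) *
              (FreeGroup.of (mkPair j k hjk, εjk) * FreeGroup.of (mkPair i k hik, εik) *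
               FreeGroup.of (mkPair i j hij, εij))⁻¹)}

/-- The group `G_{n,P}^2`. -/
abbrev GnP2 (n : ℕ) := PresentedGroup (gnP2Rels n)

/-- The generator `a_{ij}^ε` of `G_{n,P}^2`. -/
def AP {n : ℕ} (i j : Fin n) (h : i ≠ j) (ε : ZMod 2) : GnP2 n :=
  PresentedGroup.of (mkPair i j h, ε)

/-- Alphabet of `G_{n,D}^2`: crossing generators `a_{ij}` and point generators `τ_i`. -/
abbrev DIdx (n : ℕ) := PairIdx n ⊕ Fin n

/-- Relations of the group `G_{n,D}^2` (`G_n^2` with points). -/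
def gnD2Rels (n : ℕ) : Set (FreeGroup (DIdx n)) :=
  {r | (∃ (i j : Fin n) (h : i ≠ j),
          r = FreeGroup.of (Sum.inl (mkPair i j h) : DIdx n) *
              FreeGroup.of (Sum.inl (mkPair i j h) : DIdx n)) ∨
       (∃ (i j k l : Fin n) (hij : i ≠ j) (hkl : k ≠ l),
          i ≠ k ∧ i ≠ l ∧ j ≠ k ∧ j ≠ l ∧
          r = FreeGroup.of (Sum.inl (mkPair i j hij) : DIdx n) *
              FreeGroup.of (Sum.inl (mkPair k l hkl) : DIdx n) *
              (FreeGroup.of (Sum.inl (mkPair i j hij) : DIdx n))⁻¹ *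
              (FreeGroup.of (Sum.inl (mkPair k l hkl) : DIdx n))⁻¹) ∨
       (∃ (i j k : Fin n) (hij : i ≠ j) (hik : i ≠ k) (hjk : j ≠ k),
          r = FreeGroup.of (Sum.inl (mkPair i j hij) : DIdx n) *
              FreeGroup.of (Sum.inl (mkPair i k hik) : DIdx n) *
              FreeGroup.of (Sum.inl (mkPair j k hjk) : DIdx n) *
              (FreeGroup.of (Sum.inl (mkPair j k hjk) : DIdx n) *
               FreeGroup.of (Sum.inl (mkPair i k hik) : DIdx n) *
               FreeGroup.of (Sum.inl (mkPair i j hij) : DIdx n))⁻¹) ∨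
       (∃ i : Fin n,
          r = FreeGroup.of (Sum.inr i : DIdx n) * FreeGroup.of (Sum.inr i : DIdx n)) ∨
       (∃ i j : Fin n,
          r = FreeGroup.of (Sum.inr i : DIdx n) * FreeGroup.of (Sum.inr j : DIdx n) *
              (FreeGroup.of (Sum.inr i : DIdx n))⁻¹ * (FreeGroup.of (Sum.inr j : DIdx n))⁻¹) ∨
       (∃ (i j : Fin n) (h : i ≠ j),
          r = FreeGroup.of (Sum.inr i : DIdx n) * FreeGroup.of (Sum.inr j : DIdx n) *
              FreeGroup.of (Sum.inl (mkPair i j h) : DIdx n) *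
              FreeGroup.of (Sum.inr j : DIdx n) * FreeGroup.of (Sum.inr i : DIdx n) *
              (FreeGroup.of (Sum.inl (mkPair i j h) : DIdx n))⁻¹) ∨
       (∃ (i j k : Fin n) (h : i ≠ j), k ≠ i ∧ k ≠ j ∧
          r = FreeGroup.of (Sum.inl (mkPair i j h) : DIdx n) *
              FreeGroup.of (Sum.inr k : DIdx n) *
              (FreeGroup.of (Sum.inl (mkPair i j h) : DIdx n))⁻¹ *
              (FreeGroup.of (Sum.inr k : DIdx n))⁻¹)}

/-- The group `G_{n,D}^2`. -/
abbrev GnD2 (n : ℕ) := PresentedGroup (gnD2Rels n)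

/-- The generator `a_{ij}` of `G_{n,D}^2`. -/
def AD {n : ℕ} (i j : Fin n) (h : i ≠ j) : GnD2 n := PresentedGroup.of (Sum.inl (mkPair i j h))

/-- The generator `τ_i` of `G_{n,D}^2`. -/
def T {n : ℕ} (i : Fin n) : GnD2 n := PresentedGroup.of (Sum.inr i)

open scoped commutatorElement

/-- The forbidden relators: commutators `[a_{i(n+1)}, a_{j(n+1)}]` in `G_{n+1}^2`. -/
def forbiddenRels (n : ℕ) : Set (Gn2 (n + 1)) :=
  {x | ∃ (i j : Fin n) (h : i ≠ j),
    x = ⁅A2 i.castSucc (Fin.last n) (Fin.castSucc_lt_last i).ne,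
         A2 j.castSucc (Fin.last n) (Fin.castSucc_lt_last j).ne⁆}

/-- The quotient `G_{n+1}^2 / ⟨a_{i(n+1)}a_{j(n+1)} = a_{j(n+1)}a_{i(n+1)}⟩`. -/
abbrev Gn2Quot (n : ℕ) := Gn2 (n + 1) ⧸ Subgroup.normalClosure (forbiddenRels n)

/-- The projection `G_{n+1}^2 → G_{n+1}^2 / ⟨a_{i(n+1)}a_{j(n+1)} = a_{j(n+1)}a_{i(n+1)}⟩`. -/
def toQuot (n : ℕ) : Gn2 (n + 1) →* Gn2Quot n :=
  QuotientGroup.mk' (Subgroup.normalClosure (forbiddenRels n))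

/-! In the quotient the elements `b_i = a_{i(n+1)}` are commuting involutions, and for commuting
involutions the triple relation `a_{ij} b_i b_j = b_j b_i a_{ij}` says exactly that `b_i b_j`
commutes with `a_{ij}`, i.e. `b_i b_j a_{ij} b_j b_i = a_{ij}`; far commutativity with the index
`n+1` says `a_{ij} b_k = b_k a_{ij}`. So a family `(a, τ)` satisfies the relations of `G_{n,D}^2`
exactly when the family on `n+1` indices with `a_{i(n+1)} = τ_i` satisfies those of `G_{n+1}^2`
and has commuting `a_{i(n+1)}`. This yields `κ` and `ω`, which are inverse on generators. -/

section GroupLemmas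

variable {G : Type*} [Group G] {x y c : G}

theorem conj_mul_involutions_eq_iff_commute (hx : x * x = 1) (hy : y * y = 1) :
    x * y * c * y * x = c ↔ Commute (x * y) c := by
  have hinv : (x * y)⁻¹ = y * x := by
    rw [mul_inv_rev, inv_eq_of_mul_eq_one_right hx, inv_eq_of_mul_eq_one_right hy]
  rw [mul_assoc (x * y * c), ← hinv, mul_inv_eq_iff_eq_mul]
  exact Iff.rfl

theorem mul_mul_eq_mul_mul_of_commute (hy : y * y = 1) (hxy : Commute x y)
    (h : Commute (x * y) c) : x * c * y = y * c * x :=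
  calc x * c * y = y * y * x * c * y := by rw [hy, one_mul]
    _ = y * ((y * x) * c) * y := by simp only [mul_assoc]
    _ = y * (c * (x * y)) * y := by rw [← hxy.eq, h.eq]
    _ = y * c * x := by simp only [mul_assoc, hy, mul_one]

theorem mul_mul_inv_mul_inv_eq_one_iff_commute : x * y * x⁻¹ * y⁻¹ = 1 ↔ Commute x y := by
  rw [← commutatorElement_def, commutatorElement_eq_one_iff_mul_comm]
  exact Iff.rfl

theorem commute_mul_iff_of_commute (hxy : Commute x y) :
    Commute (x * y) c ↔ c * x * y = y * x * c := by
  rw [← hxy.eq, mul_assoc c, eq_comm]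
  exact Iff.rfl

end GroupLemmas

theorem PresentedGroup.commute_of_mem {α : Type*} {rels : Set (FreeGroup α)} {x y : α}
    (h : FreeGroup.of x * FreeGroup.of y * (FreeGroup.of x)⁻¹ * (FreeGroup.of y)⁻¹ ∈ rels) :
    Commute (PresentedGroup.of (rels := rels) x) (PresentedGroup.of y) :=
  mul_mul_inv_mul_inv_eq_one_iff_commute.mp (PresentedGroup.one_of_mem h)

namespace PairIdx

variable {m : ℕ}

theorem exists_eq_mkPair (s : PairIdx m) : ∃ (i j : Fin m) (h : i ≠ j), s = mkPair i j h := by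
  obtain ⟨i, j, h, hs⟩ := Finset.card_eq_two.mp s.2
  exact ⟨i, j, h, Subtype.ext hs⟩

theorem mkPair_eq_mkPair_iff {i j k l : Fin m} {hij : i ≠ j} {hkl : k ≠ l} :
    mkPair i j hij = mkPair k l hkl ↔ i = k ∧ j = l ∨ i = l ∧ j = k := by
  rw [mkPair, mkPair, Subtype.mk.injEq, ← Finset.coe_inj, Finset.coe_pair, Finset.coe_pair,
    Set.pair_eq_pair_iff]

theorem mkPair_comm (i j : Fin m) (h : i ≠ j) : mkPair i j h = mkPair j i h.symm :=
  mkPair_eq_mkPair_iff.mpr (Or.inr ⟨rfl, rfl⟩)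

variable {α : Sort*}

noncomputable def lift (f : ∀ i j : Fin m, i ≠ j → α) (s : PairIdx m) : α :=
  let hs := s.exists_eq_mkPair
  f hs.choose hs.choose_spec.choose hs.choose_spec.choose_spec.choose

theorem lift_mkPair {f : ∀ i j : Fin m, i ≠ j → α} (hf : ∀ i j (h : i ≠ j), f i j h = f j i h.symm)
    (i j : Fin m) (h : i ≠ j) : lift f (mkPair i j h) = f i j h := by
  have key : ∀ k l (hkl : k ≠ l), mkPair i j h = mkPair k l hkl → f k l hkl = f i j h := by
    intro k l hkl e
    rcases mkPair_eq_mkPair_iff.mp e with ⟨rfl, rfl⟩ | ⟨rfl, rfl⟩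
    · rfl
    · exact hf _ _ _
  exact key _ _ _ (mkPair i j h).exists_eq_mkPair.choose_spec.choose_spec.choose_spec

end PairIdx

section Families

variable {m : ℕ} {G H : Type*} [Group G] [Group H]

structure IsGn2Family (a : ∀ i j : Fin m, i ≠ j → G) : Prop where
  symm : ∀ i j (h : i ≠ j), a i j h = a j i h.symm
  mul_self : ∀ i j (h : i ≠ j), a i j h * a i j h = 1
  commute : ∀ i j k l (hij : i ≠ j) (hkl : k ≠ l), i ≠ k → i ≠ l → j ≠ k → j ≠ l →
    Commute (a i j hij) (a k l hkl)
  triple : ∀ i j k (hij : i ≠ j) (hik : i ≠ k) (hjk : j ≠ k),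
    a i j hij * a i k hik * a j k hjk = a j k hjk * a i k hik * a i j hij

structure IsGnD2Family (a : ∀ i j : Fin m, i ≠ j → G) (t : Fin m → G) : Prop
    extends IsGn2Family a where
  t_mul_self : ∀ i, t i * t i = 1
  commute_t : ∀ i j, Commute (t i) (t j)
  t_mul_t_conj : ∀ i j (h : i ≠ j), t i * t j * a i j h * t j * t i = a i j h
  commute_t_of_ne : ∀ i j (h : i ≠ j) k, k ≠ i → k ≠ j → Commute (a i j h) (t k)

variable {a : ∀ i j : Fin m, i ≠ j → G} {t : Fin m → G}

theorem IsGn2Family.map (ha : IsGn2Family a) (φ : G →* H) :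
    IsGn2Family fun i j h => φ (a i j h) where
  symm i j h := by rw [ha.symm]
  mul_self i j h := by rw [← map_mul, ha.mul_self, map_one]
  commute i j k l hij hkl hik hil hjk hjl := (ha.commute i j k l hij hkl hik hil hjk hjl).map φ
  triple i j k hij hik hjk := by simp only [← map_mul, ha.triple i j k hij hik hjk]

theorem IsGn2Family.lift_eq_one (ha : IsGn2Family a) :
    ∀ r ∈ gn2Rels m, FreeGroup.lift (PairIdx.lift a) r = 1 := by
  rintro r (⟨i, j, h, rfl⟩ | ⟨i, j, k, l, hij, hkl, hik, hil, hjk, hjl, rfl⟩ |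
    ⟨i, j, k, hij, hik, hjk, rfl⟩) <;>
    simp only [map_mul, map_inv, FreeGroup.lift_apply_of, PairIdx.lift_mkPair ha.symm]
  · exact ha.mul_self i j h
  · exact mul_mul_inv_mul_inv_eq_one_iff_commute.mpr (ha.commute i j k l hij hkl hik hil hjk hjl)
  · exact mul_inv_eq_one.mpr (ha.triple i j k hij hik hjk)

noncomputable def Gn2.lift (ha : IsGn2Family a) : Gn2 m →* G :=
  PresentedGroup.toGroup ha.lift_eq_one

theorem Gn2.lift_A2 (ha : IsGn2Family a) (i j : Fin m) (h : i ≠ j) :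
    Gn2.lift ha (A2 i j h) = a i j h :=
  (PresentedGroup.toGroup.of _).trans (PairIdx.lift_mkPair ha.symm i j h)

theorem IsGnD2Family.lift_eq_one (hat : IsGnD2Family a t) :
    ∀ r ∈ gnD2Rels m, FreeGroup.lift (Sum.elim (PairIdx.lift a) t) r = 1 := by
  rintro r (⟨i, j, h, rfl⟩ | ⟨i, j, k, l, hij, hkl, hik, hil, hjk, hjl, rfl⟩ |
    ⟨i, j, k, hij, hik, hjk, rfl⟩ | ⟨i, rfl⟩ | ⟨i, j, rfl⟩ | ⟨i, j, h, rfl⟩ |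
    ⟨i, j, k, h, hki, hkj, rfl⟩) <;>
    simp only [map_mul, map_inv, FreeGroup.lift_apply_of, Sum.elim_inl, Sum.elim_inr,
      PairIdx.lift_mkPair hat.symm]
  · exact hat.mul_self i j h
  · exact mul_mul_inv_mul_inv_eq_one_iff_commute.mpr (hat.commute i j k l hij hkl hik hil hjk hjl)
  · exact mul_inv_eq_one.mpr (hat.triple i j k hij hik hjk)
  · exact hat.t_mul_self i
  · exact mul_mul_inv_mul_inv_eq_one_iff_commute.mpr (hat.commute_t i j)
  · exact mul_inv_eq_one.mpr (hat.t_mul_t_conj i j h)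
  · exact mul_mul_inv_mul_inv_eq_one_iff_commute.mpr (hat.commute_t_of_ne i j h k hki hkj)

noncomputable def GnD2.lift (hat : IsGnD2Family a t) : GnD2 m →* G :=
  PresentedGroup.toGroup hat.lift_eq_one

theorem GnD2.lift_AD (hat : IsGnD2Family a t) (i j : Fin m) (h : i ≠ j) :
    GnD2.lift hat (AD i j h) = a i j h :=
  (PresentedGroup.toGroup.of _).trans (PairIdx.lift_mkPair hat.symm i j h)

theorem GnD2.lift_T (hat : IsGnD2Family a t) (i : Fin m) : GnD2.lift hat (T i) = t i :=
  PresentedGroup.toGroup.of _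

theorem isGn2Family_A2 : IsGn2Family (@A2 m) where
  symm i j h := by rw [A2, A2, PairIdx.mkPair_comm]
  mul_self i j h := PresentedGroup.one_of_mem (Or.inl ⟨i, j, h, rfl⟩)
  commute i j k l hij hkl hik hil hjk hjl := PresentedGroup.commute_of_mem
    (Or.inr (Or.inl ⟨i, j, k, l, hij, hkl, hik, hil, hjk, hjl, rfl⟩))
  triple i j k hij hik hjk :=
    PresentedGroup.mk_eq_mk_of_mul_inv_mem (Or.inr (Or.inr ⟨i, j, k, hij, hik, hjk, rfl⟩))

theorem isGnD2Family_AD_T : IsGnD2Family (@AD m) T where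
  symm i j h := by rw [AD, AD, PairIdx.mkPair_comm]
  mul_self i j h := PresentedGroup.one_of_mem (Or.inl ⟨i, j, h, rfl⟩)
  commute i j k l hij hkl hik hil hjk hjl := PresentedGroup.commute_of_mem
    (Or.inr (Or.inl ⟨i, j, k, l, hij, hkl, hik, hil, hjk, hjl, rfl⟩))
  triple i j k hij hik hjk := PresentedGroup.mk_eq_mk_of_mul_inv_mem
    (Or.inr (Or.inr (Or.inl ⟨i, j, k, hij, hik, hjk, rfl⟩)))
  t_mul_self i := PresentedGroup.one_of_mem (Or.inr (Or.inr (Or.inr (Or.inl ⟨i, rfl⟩))))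
  commute_t i j := PresentedGroup.commute_of_mem
    (Or.inr (Or.inr (Or.inr (Or.inr (Or.inl ⟨i, j, rfl⟩)))))
  t_mul_t_conj i j h := PresentedGroup.mk_eq_mk_of_mul_inv_mem
    (Or.inr (Or.inr (Or.inr (Or.inr (Or.inr (Or.inl ⟨i, j, h, rfl⟩))))))
  commute_t_of_ne i j h k hki hkj := PresentedGroup.commute_of_mem
    (Or.inr (Or.inr (Or.inr (Or.inr (Or.inr (Or.inr ⟨i, j, k, h, hki, hkj, rfl⟩))))))

end Families

section Extend

variable {m : ℕ} {α : Sort*} {a : ∀ i j : Fin m, i ≠ j → α} {t : Fin m → α}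

variable (a t) in
def extendLast (i j : Fin (m + 1)) (h : i ≠ j) : α :=
  if hi : i = Fin.last m then t (j.castPred fun hj => h (hi.trans hj.symm))
  else if hj : j = Fin.last m then t (i.castPred hi)
  else a (i.castPred hi) (j.castPred hj) fun e => h (Fin.castPred_inj.mp e)

@[simp]
theorem extendLast_castSucc_castSucc (i j : Fin m) (h : i.castSucc ≠ j.castSucc) :
    extendLast a t i.castSucc j.castSucc h = a i j ((Fin.castSucc_injective m).ne_iff.mp h) := by
  simp [extendLast]

@[simp]
theorem extendLast_castSucc_last (i : Fin m) (h : i.castSucc ≠ Fin.last m) :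
    extendLast a t i.castSucc (Fin.last m) h = t i := by
  simp [extendLast]

@[simp]
theorem extendLast_last_castSucc (j : Fin m) (h : Fin.last m ≠ j.castSucc) :
    extendLast a t (Fin.last m) j.castSucc h = t j := by
  simp [extendLast]

end Extend

section LastIndex

variable {m : ℕ} {G : Type*} [Group G] {a : ∀ i j : Fin m, i ≠ j → G} {t : Fin m → G}

theorem IsGn2Family.isGnD2Family_restrict {b : ∀ i j : Fin (m + 1), i ≠ j → G}
    (hb : IsGn2Family b)
    (hlast : ∀ i j : Fin m, i ≠ j → Commute (b i.castSucc (Fin.last m) (Fin.castSucc_ne_last i))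
      (b j.castSucc (Fin.last m) (Fin.castSucc_ne_last j))) :
    IsGnD2Family (fun i j h => b i.castSucc j.castSucc ((Fin.castSucc_injective m).ne h))
      (fun i => b i.castSucc (Fin.last m) (Fin.castSucc_ne_last i)) where
  symm i j h := hb.symm _ _ _
  mul_self i j h := hb.mul_self _ _ _
  commute i j k l hij hkl hik hil hjk hjl := by
    apply hb.commute <;> simpa only [ne_eq, Fin.castSucc_inj]
  triple i j k hij hik hjk := hb.triple _ _ _ _ _ _
  t_mul_self i := hb.mul_self _ _ _
  commute_t i j := by
    rcases eq_or_ne i j with rfl | hij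
    · exact Commute.refl _
    · exact hlast i j hij
  t_mul_t_conj i j h := by
    rw [conj_mul_involutions_eq_iff_commute (hb.mul_self _ _ _) (hb.mul_self _ _ _),
      commute_mul_iff_of_commute (hlast i j h)]
    exact hb.triple _ _ _ _ _ _
  commute_t_of_ne i j h k hki hkj := by
    apply hb.commute <;> simp [Fin.castSucc_inj, Ne.symm, *]

theorem IsGnD2Family.commute_t_mul_t (hat : IsGnD2Family a t) (i j : Fin m) (h : i ≠ j) :
    Commute (t i * t j) (a i j h) :=
  (conj_mul_involutions_eq_iff_commute (hat.t_mul_self i) (hat.t_mul_self j)).mp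
    (hat.t_mul_t_conj i j h)

theorem IsGnD2Family.isGn2Family_extendLast (hat : IsGnD2Family a t) :
    IsGn2Family (extendLast a t) where
  symm i j h := by
    cases i using Fin.lastCases <;> cases j using Fin.lastCases
    all_goals first
      | exact absurd rfl h
      | simp only [extendLast_castSucc_castSucc, extendLast_castSucc_last,
          extendLast_last_castSucc]
    exact hat.symm _ _ _
  mul_self i j h := by
    cases i using Fin.lastCases <;> cases j using Fin.lastCases
    all_goals first
      | exact absurd rfl h
      | simp only [extendLast_castSucc_castSucc, extendLast_castSucc_last,
          extendLast_last_castSucc]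
    · exact hat.t_mul_self _
    · exact hat.t_mul_self _
    · exact hat.mul_self _ _ _
  commute i j k l hij hkl hik hil hjk hjl := by
    cases i using Fin.lastCases <;> cases j using Fin.lastCases <;>
      cases k using Fin.lastCases <;> cases l using Fin.lastCases
    all_goals first
      | exact absurd rfl hij | exact absurd rfl hkl | exact absurd rfl hik
      | exact absurd rfl hil | exact absurd rfl hjk | exact absurd rfl hjl
      | simp only [extendLast_castSucc_castSucc, extendLast_castSucc_last,
          extendLast_last_castSucc, ne_eq, Fin.castSucc_inj] at hik hil hjk hjl ⊢
    -- the last index is `i`, `j`, `k`, `l`, or none of them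
    · exact (hat.commute_t_of_ne _ _ _ _ hjk hjl).symm
    · exact (hat.commute_t_of_ne _ _ _ _ hik hil).symm
    · exact hat.commute_t_of_ne _ _ _ _ (Ne.symm hil) (Ne.symm hjl)
    · exact hat.commute_t_of_ne _ _ _ _ (Ne.symm hik) (Ne.symm hjk)
    · exact hat.commute _ _ _ _ _ _ hik hil hjk hjl
  triple i j k hij hik hjk := by
    cases i using Fin.lastCases <;> cases j using Fin.lastCases <;>
      cases k using Fin.lastCases
    all_goals first
      | exact absurd rfl hij | exact absurd rfl hik | exact absurd rfl hjk
      | simp only [extendLast_castSucc_castSucc, extendLast_castSucc_last,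
          extendLast_last_castSucc]
    -- the last index is `i`, `j`, `k`, or none of them
    · rw [(hat.commute_t_mul_t _ _ _).eq, mul_assoc, (hat.commute_t _ _).eq]
    · exact mul_mul_eq_mul_mul_of_commute (hat.t_mul_self _) (hat.commute_t _ _)
        (hat.commute_t_mul_t _ _ _)
    · exact (commute_mul_iff_of_commute (hat.commute_t _ _)).mp (hat.commute_t_mul_t _ _ _)
    · exact hat.triple _ _ _ _ _ _

end LastIndex

section Isomorphism

variable (n : ℕ)

theorem commute_toQuot_A2_last (i j : Fin n) (h : i ≠ j) :
    Commute (toQuot n (A2 i.castSucc (Fin.last n) (Fin.castSucc_ne_last i)))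
      (toQuot n (A2 j.castSucc (Fin.last n) (Fin.castSucc_ne_last j))) := by
  rw [Commute, SemiconjBy, ← commutatorElement_eq_one_iff_mul_comm, ← map_commutatorElement]
  exact (QuotientGroup.eq_one_iff _).mpr (Subgroup.subset_normalClosure ⟨i, j, h, rfl⟩)

noncomputable def kappa : GnD2 n →* Gn2Quot n :=
  GnD2.lift ((isGn2Family_A2.map (toQuot n)).isGnD2Family_restrict (commute_toQuot_A2_last n))

noncomputable def omegaLift : Gn2 (n + 1) →* GnD2 n :=
  Gn2.lift isGnD2Family_AD_T.isGn2Family_extendLast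

theorem omegaLift_A2_castSucc_last (i : Fin n) :
    omegaLift n (A2 i.castSucc (Fin.last n) (Fin.castSucc_ne_last i)) = T i := by
  rw [omegaLift, Gn2.lift_A2, extendLast_castSucc_last]

theorem normalClosure_forbiddenRels_le_ker :
    Subgroup.normalClosure (forbiddenRels n) ≤ (omegaLift n).ker := by
  refine Subgroup.normalClosure_le_normal ?_
  rintro _ ⟨i, j, -, rfl⟩
  rw [SetLike.mem_coe, MonoidHom.mem_ker, map_commutatorElement, omegaLift_A2_castSucc_last,
    omegaLift_A2_castSucc_last, commutatorElement_eq_one_iff_mul_comm]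
  exact isGnD2Family_AD_T.commute_t i j

noncomputable def omega : Gn2Quot n →* GnD2 n :=
  QuotientGroup.lift _ (omegaLift n) (normalClosure_forbiddenRels_le_ker n)

variable {n}

theorem kappa_AD (i j : Fin n) (h : i ≠ j) :
    kappa n (AD i j h) = toQuot n (A2 i.castSucc j.castSucc ((Fin.castSucc_injective n).ne h)) :=
  GnD2.lift_AD _ i j h

theorem kappa_T (i : Fin n) :
    kappa n (T i) = toQuot n (A2 i.castSucc (Fin.last n) (Fin.castSucc_ne_last i)) :=
  GnD2.lift_T _ i

theorem omega_toQuot_A2_castSucc (i j : Fin n) (h : i ≠ j) :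
    omega n (toQuot n (A2 i.castSucc j.castSucc ((Fin.castSucc_injective n).ne h))) = AD i j h := by
  rw [omega, toQuot, QuotientGroup.mk'_apply, QuotientGroup.lift_mk, omegaLift, Gn2.lift_A2,
    extendLast_castSucc_castSucc]

theorem omega_toQuot_A2_last (i : Fin n) :
    omega n (toQuot n (A2 i.castSucc (Fin.last n) (Fin.castSucc_ne_last i))) = T i :=
  omegaLift_A2_castSucc_last n i

theorem omega_comp_kappa : (omega n).comp (kappa n) = MonoidHom.id (GnD2 n) := by
  refine PresentedGroup.ext fun x => ?_
  rcases x with s | i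
  · obtain ⟨i, j, h, rfl⟩ := s.exists_eq_mkPair
    exact (congrArg (omega n) (kappa_AD i j h)).trans (omega_toQuot_A2_castSucc i j h)
  · exact (congrArg (omega n) (kappa_T i)).trans (omega_toQuot_A2_last i)

theorem kappa_omega_toQuot_A2 (i j : Fin (n + 1)) (h : i ≠ j) :
    kappa n (omega n (toQuot n (A2 i j h))) = toQuot n (A2 i j h) := by
  cases i using Fin.lastCases <;> cases j using Fin.lastCases
  · exact absurd rfl h
  · rw [isGn2Family_A2.symm, omega_toQuot_A2_last, kappa_T]
  · rw [omega_toQuot_A2_last, kappa_T]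
  · rw [omega_toQuot_A2_castSucc _ _ (Fin.castSucc_injective n |>.ne_iff.mp h), kappa_AD]

theorem kappa_comp_omega : (kappa n).comp (omega n) = MonoidHom.id (Gn2Quot n) := by
  refine QuotientGroup.monoidHom_ext _ (PresentedGroup.ext fun s => ?_)
  obtain ⟨i, j, h, rfl⟩ := s.exists_eq_mkPair
  exact kappa_omega_toQuot_A2 i j h

end Isomorphism

theorem stmt12_general (n : ℕ) :
    ∃ (κ : GnD2 n →* Gn2Quot n) (ω : Gn2Quot n →* GnD2 n),
      (∀ (i j : Fin n) (h : i ≠ j),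
        κ (AD i j h) = toQuot n (A2 i.castSucc j.castSucc ((Fin.castSucc_injective n).ne h))) ∧
      (∀ i : Fin n,
        κ (T i) = toQuot n (A2 i.castSucc (Fin.last n) (Fin.castSucc_lt_last i).ne)) ∧
      (∀ (i j : Fin n) (h : i ≠ j),
        ω (toQuot n (A2 i.castSucc j.castSucc ((Fin.castSucc_injective n).ne h))) = AD i j h) ∧
      (∀ i : Fin n,
        ω (toQuot n (A2 i.castSucc (Fin.last n) (Fin.castSucc_lt_last i).ne)) = T i) ∧
      ω.comp κ = MonoidHom.id (GnD2 n) ∧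
      κ.comp ω = MonoidHom.id (Gn2Quot n) :=
  ⟨kappa n, omega n, kappa_AD, kappa_T, omega_toQuot_A2_castSucc, omega_toQuot_A2_last,
    omega_comp_kappa, kappa_comp_omega⟩

/-- `G_{n,D}^2` and `G_{n+1}^2 / ⟨a_{i(n+1)}a_{j(n+1)} = a_{j(n+1)}a_{i(n+1)}⟩`
are isomorphic via the mutually inverse homomorphisms `κ` (`a_{ij} ↦ a_{ij}`,
`τ_i ↦ a_{i(n+1)}`) and `ω` (`a_{ij} ↦ a_{ij}` for `i,j ≤ n`, `a_{i(n+1)} ↦ τ_i`). -/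
theorem stmt12 (n : ℕ) (hn : 2 < n) :
    ∃ (κ : GnD2 n →* Gn2Quot n) (ω : Gn2Quot n →* GnD2 n),
      (∀ (i j : Fin n) (h : i ≠ j),
        κ (AD i j h) = toQuot n (A2 i.castSucc j.castSucc ((Fin.castSucc_injective n).ne h))) ∧
      (∀ i : Fin n,
        κ (T i) = toQuot n (A2 i.castSucc (Fin.last n) (Fin.castSucc_lt_last i).ne)) ∧
      (∀ (i j : Fin n) (h : i ≠ j),
        ω (toQuot n (A2 i.castSucc j.castSucc ((Fin.castSucc_injective n).ne h))) = AD i j h) ∧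
      (∀ i : Fin n,
        ω (toQuot n (A2 i.castSucc (Fin.last n) (Fin.castSucc_lt_last i).ne)) = T i) ∧
      ω.comp κ = MonoidHom.id (GnD2 n) ∧
      κ.comp ω = MonoidHom.id (Gn2Quot n) :=
  stmt12_general n
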